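/- Every non-empty word over the two-letter alphabet {α, β} can be reduced, using the rewriting rules αα → α, ββ → β, αβαβ → αβ, βαβα → βα, to one of the six normal forms: α, β, αβ, βα, αβα, βαβ. Consequently the origami monoid O_2 has at most 7 elements (including the identity). -/

import Mathlib

/-- Two-letter alphabet for the origami monoid `O₂`: `a` stands for α, `b` for β. -/
inductive G2 | a | b
deriving DecidableEq

def A : FreeMonoid G2 := FreeMonoid.of G2.a
def B : FreeMonoid G2 := FreeMonoid.of G2.b

/-- Defining relations of `O₂`: α² = α, β² = β, (αβ)² = αβ, (βα)² = βα. -/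
def O2Rel : FreeMonoid G2 → FreeMonoid G2 → Prop := fun x y =>
  (x = A * A ∧ y = A) ∨ (x = B * B ∧ y = B) ∨
  (x = A * B * A * B ∧ y = A * B) ∨ (x = B * A * B * A ∧ y = B * A)

/-- The origami monoid `O₂`. -/
abbrev O2 := (conGen O2Rel).Quotient

/-- The canonical projection from the free monoid to `O₂`. -/
def q : FreeMonoid G2 →* O2 := (conGen O2Rel).mk'

/-- One rewriting step: replace a factor `l` by `r` where `l → r` is a rewriting rule. -/
def Step (x y : FreeMonoid G2) : Prop :=
  ∃ u v l r, O2Rel l r ∧ x = u * l * v ∧ y = u * r * v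

lemma step_of (u v : FreeMonoid G2) {l r : FreeMonoid G2} (h : O2Rel l r) :
    Step (u * l * v) (u * r * v) := ⟨u, v, l, r, h, rfl, rfl⟩

lemma step_mul_right {x y : FreeMonoid G2} (c : FreeMonoid G2) (h : Step x y) :
    Step (x * c) (y * c) := by
  obtain ⟨u, v, l, r, hr, hx, hy⟩ := h
  exact ⟨u, v * c, l, r, hr, by rw [hx]; simp [mul_assoc], by rw [hy]; simp [mul_assoc]⟩

lemma rtg_mul_right {x y : FreeMonoid G2} (c : FreeMonoid G2)
    (h : Relation.ReflTransGen Step x y) :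
    Relation.ReflTransGen Step (x * c) (y * c) :=
  Relation.ReflTransGen.lift (· * c) (fun _ _ h => step_mul_right c h) _ _ h

def NF : Set (FreeMonoid G2) := {A, B, A * B, B * A, A * B * A, B * A * B}

lemma one_step : ∀ nf ∈ NF, ∀ g : G2,
    ∃ nf' ∈ NF, Relation.ReflTransGen Step (nf * FreeMonoid.of g) nf' := by
  have hAA : O2Rel (A * A) A := Or.inl ⟨rfl, rfl⟩
  have hBB : O2Rel (B * B) B := Or.inr (Or.inl ⟨rfl, rfl⟩)
  have hABAB : O2Rel (A * B * A * B) (A * B) := Or.inr (Or.inr (Or.inl ⟨rfl, rfl⟩))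
  have hBABA : O2Rel (B * A * B * A) (B * A) := Or.inr (Or.inr (Or.inr ⟨rfl, rfl⟩))
  intro nf hnf g
  simp only [NF, Set.mem_insert_iff, Set.mem_singleton_iff] at hnf
  rcases hnf with rfl | rfl | rfl | rfl | rfl | rfl <;> cases g
  · exact ⟨A, by simp [NF], Relation.ReflTransGen.single
      (by simpa [A] using step_of 1 1 hAA)⟩
  · exact ⟨A * B, by simp [NF], Relation.ReflTransGen.refl⟩
  · exact ⟨B * A, by simp [NF], Relation.ReflTransGen.refl⟩
  · exact ⟨B, by simp [NF], Relation.ReflTransGen.single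
      (by simpa [B] using step_of 1 1 hBB)⟩
  · exact ⟨A * B * A, by simp [NF], Relation.ReflTransGen.refl⟩
  · exact ⟨A * B, by simp [NF], Relation.ReflTransGen.single
      (by simpa [mul_assoc, A, B] using step_of A 1 hBB)⟩
  · exact ⟨B * A, by simp [NF], Relation.ReflTransGen.single
      (by simpa [mul_assoc, A, B] using step_of B 1 hAA)⟩
  · exact ⟨B * A * B, by simp [NF], Relation.ReflTransGen.refl⟩
  · exact ⟨A * B * A, by simp [NF], Relation.ReflTransGen.single
      (by simpa [mul_assoc, A, B] using step_of (A * B) 1 hAA)⟩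
  · exact ⟨A * B, by simp [NF], Relation.ReflTransGen.single
      (by simpa [mul_assoc, A, B] using step_of 1 1 hABAB)⟩
  · exact ⟨B * A, by simp [NF], Relation.ReflTransGen.single
      (by simpa [mul_assoc, A, B] using step_of 1 1 hBABA)⟩
  · exact ⟨B * A * B, by simp [NF], Relation.ReflTransGen.single
      (by simpa [mul_assoc, A, B] using step_of (B * A) 1 hBB)⟩

lemma reduce_aux : ∀ (w : List G2), ∀ nf ∈ NF,
    ∃ nf' ∈ NF, Relation.ReflTransGen Step (nf * FreeMonoid.ofList w) nf' := by
  intro w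
  induction w with
  | nil => intro nf hnf; exact ⟨nf, hnf, by simp [Relation.ReflTransGen.refl]⟩
  | cons g t ih =>
    intro nf hnf
    obtain ⟨nf'', h'', hstep⟩ := one_step nf hnf g
    obtain ⟨nf', h', hred⟩ := ih nf'' h''
    refine ⟨nf', h', ?_⟩
    have h1 : Relation.ReflTransGen Step (nf * FreeMonoid.of g * FreeMonoid.ofList t)
        (nf'' * FreeMonoid.ofList t) := rtg_mul_right _ hstep
    have heq : nf * FreeMonoid.ofList (g :: t)
        = nf * FreeMonoid.of g * FreeMonoid.ofList t := by
      simp [mul_assoc]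
    rw [heq]
    exact h1.trans hred

lemma q_eq_of_step {x y : FreeMonoid G2} (h : Step x y) : q x = q y := by
  obtain ⟨u, v, l, r, hr, rfl, rfl⟩ := h
  have hc : (conGen O2Rel) l r := ConGen.Rel.of _ _ hr
  have : (conGen O2Rel) (u * l * v) (u * r * v) :=
    Con.mul _ (Con.mul _ (Con.refl _ u) hc) (Con.refl _ v)
  exact (Con.eq _).mpr this

lemma q_eq_of_rtg {x y : FreeMonoid G2} (h : Relation.ReflTransGen Step x y) : q x = q y := by
  induction h with
  | refl => rfl
  | tail _ h ih => exact ih.trans (q_eq_of_step h)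

/-- Every non-empty word over {α, β} reduces to one of the six normal forms
α, β, αβ, βα, αβα, βαβ; consequently `O₂` has at most 7 elements. -/
theorem stmt_0 :
    (∀ w : FreeMonoid G2, w ≠ 1 →
      ∃ nf ∈ ({A, B, A * B, B * A, A * B * A, B * A * B} : Set (FreeMonoid G2)),
        Relation.ReflTransGen Step w nf) ∧
    (∃ l : List O2, l.length ≤ 7 ∧ ∀ x : O2, x ∈ l) := by
  have main : ∀ w : FreeMonoid G2, w ≠ 1 →
      ∃ nf ∈ NF, Relation.ReflTransGen Step w nf := by
    intro w hw
    rcases hl : FreeMonoid.toList w with _ | ⟨g, t⟩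
    · exact absurd (FreeMonoid.toList.injective (by simpa using hl)) hw
    · have hw' : w = FreeMonoid.of g * FreeMonoid.ofList t := by
        apply FreeMonoid.toList.injective
        simpa using hl
      have hof : (FreeMonoid.of g : FreeMonoid G2) ∈ NF := by
        cases g <;> simp [NF, A, B]
      obtain ⟨nf, hnf, hred⟩ := reduce_aux t (FreeMonoid.of g) hof
      exact ⟨nf, hnf, hw' ▸ hred⟩
  constructor
  · exact main
  · refine ⟨[1, q A, q B, q (A * B), q (B * A), q (A * B * A), q (B * A * B)], by norm_num, ?_⟩
    intro x
    obtain ⟨w, rfl⟩ := Con.mk'_surjective x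
    by_cases hw : w = 1
    · subst hw; simp [q]
    · obtain ⟨nf, hnf, hred⟩ := main w hw
      have : q w = q nf := q_eq_of_rtg hred
      have hq : (conGen O2Rel).mk' w = q w := rfl
      rw [hq, this]
      simp only [NF, Set.mem_insert_iff, Set.mem_singleton_iff] at hnf
      rcases hnf with rfl | rfl | rfl | rfl | rfl | rfl <;> simp
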